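/- The 5-dimensional complex associative algebra μ₂ (products e₁e₁=e₂, e₁e₂=e₃, e₂e₁=e₃, e₄e₁=e₅, e₄e₄=e₃) degenerates to μ₁ (products e₁e₁=e₂, e₁e₂=e₃, e₂e₁=e₃, e₄e₁=e₅) via the parametric basis (e₁, e₂, e₃, t e₄, t e₅). -/

import Mathlib

open Module Filter Topology

/-- Structure constants of the associative algebra `μ₂` (basis `e₁,…,e₅`, 0-indexed):
`e₁e₁=e₂, e₁e₂=e₃, e₂e₁=e₃, e₄e₁=e₅, e₄e₄=e₃`. -/
noncomputable def cA : Fin 5 → Fin 5 → Fin 5 → ℂ := fun i j m =>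
  if i = 0 ∧ j = 0 ∧ m = 1 then 1
  else if i = 0 ∧ j = 1 ∧ m = 2 then 1
  else if i = 1 ∧ j = 0 ∧ m = 2 then 1
  else if i = 3 ∧ j = 0 ∧ m = 4 then 1
  else if i = 3 ∧ j = 3 ∧ m = 2 then 1
  else 0

/-- Structure constants of the algebra `μ₁`:
`e₁e₁=e₂, e₁e₂=e₃, e₂e₁=e₃, e₄e₁=e₅`. -/
noncomputable def cB : Fin 5 → Fin 5 → Fin 5 → ℂ := fun i j m =>
  if i = 0 ∧ j = 0 ∧ m = 1 then 1
  else if i = 0 ∧ j = 1 ∧ m = 2 then 1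
  else if i = 1 ∧ j = 0 ∧ m = 2 then 1
  else if i = 3 ∧ j = 0 ∧ m = 4 then 1
  else 0

/-- The multiplication of `μ₂` on `ℂ⁵`. -/
noncomputable def mulA (x y : Fin 5 → ℂ) : Fin 5 → ℂ :=
  fun m => ∑ i, ∑ j, x i * y j * cA i j m

/-- The parametric basis `(e₁, e₂, e₃, t e₄, t e₅)`. -/
noncomputable def E (t : ℂ) : Fin 5 → (Fin 5 → ℂ) :=
  fun i => (![1, 1, 1, t, t] i) • (Pi.single i 1 : Fin 5 → ℂ)

/-! Rescaling the standard basis to `fᵢ = wᵢ eᵢ` multiplies the structure constant of `eᵢ eⱼ`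
along `eₘ` by `wᵢ wⱼ / wₘ`. For `w = (1, 1, 1, t, t)` every product of `μ₁` keeps its
constant (`e₄ e₁ = e₅` scales by `t / t`), while `e₄ e₄ = e₃` acquires the factor `t²`,
which vanishes as `t → 0`. -/

section StructureConstants

variable {K ι : Type*} [DecidableEq ι]

theorem linearIndependent_smul_single [Field K] {w : ι → K} (hw : ∀ i, w i ≠ 0) :
    LinearIndependent K fun i => w i • (Pi.single i 1 : ι → K) :=
  (Pi.linearIndependent_single_one ι K).units_smul fun i => Units.mk0 (w i) (hw i)

variable [Fintype ι]

def structMul [CommSemiring K] (c : ι → ι → ι → K) (x y : ι → K) : ι → K :=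
  fun m => ∑ i, ∑ j, x i * y j * c i j m

theorem structMul_smul_single [CommSemiring K] (c : ι → ι → ι → K) (a b : K) (i j : ι) :
    structMul c (a • Pi.single i 1) (b • Pi.single j 1) = (a * b) • fun m => c i j m := by
  funext m
  simp [structMul, Pi.single_apply, mul_assoc]

theorem structMul_smul_single_eq_sum [Field K] (c : ι → ι → ι → K) {w : ι → K}
    (hw : ∀ i, w i ≠ 0) (i j : ι) :
    structMul c (w i • Pi.single i 1) (w j • Pi.single j 1) =
      ∑ m, (w i * w j / w m * c i j m) • (w m • (Pi.single m 1 : ι → K)) := by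
  rw [structMul_smul_single]
  funext k
  simp only [Finset.sum_apply, Pi.smul_apply, Pi.single_apply, smul_eq_mul, mul_ite, mul_one,
    mul_zero, Finset.sum_ite_eq, Finset.mem_univ, if_true]
  field_simp [hw k]

end StructureConstants

theorem cA_rescaled_eq_cB_add {t : ℂ} (ht : t ≠ 0) (i j m : Fin 5) :
    ![1, 1, 1, t, t] i * ![1, 1, 1, t, t] j / ![1, 1, 1, t, t] m * cA i j m =
      cB i j m + (if i = 3 ∧ j = 3 ∧ m = 2 then 1 else 0) * t ^ 2 := by
  fin_cases i <;> fin_cases j <;> fin_cases m <;> simp [cA, cB, ht, sq]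

/-- `μ₂` degenerates to `μ₁` via the parametric basis
`(e₁, e₂, e₃, t e₄, t e₅)`: for every `t ≠ 0` the family `Eᵗ` is a basis, and the
structure constants of `μ₂` in this basis converge, as `t → 0`, to those of `μ₁`. -/
theorem mu2_degenerates_to_mu1 :
    ∃ c : ℂ → Fin 5 → Fin 5 → Fin 5 → ℂ,
      (∀ t : ℂ, t ≠ 0 → LinearIndependent ℂ (E t) ∧
        ∀ i j : Fin 5, mulA (E t i) (E t j) = ∑ m, c t i j m • E t m) ∧
      (∀ i j m : Fin 5,
        Tendsto (fun t => c t i j m) (𝓝[≠] (0 : ℂ)) (𝓝 (cB i j m))) := by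
  refine ⟨fun t i j m => cB i j m + (if i = 3 ∧ j = 3 ∧ m = 2 then 1 else 0) * t ^ 2,
    fun t ht => ?_, fun i j m => ?_⟩
  · have hw : ∀ i, ![1, 1, 1, t, t] i ≠ 0 := by
      intro i; fin_cases i <;> simp [ht]
    refine ⟨linearIndependent_smul_single hw, fun i j => ?_⟩
    simp only [← cA_rescaled_eq_cB_add ht]
    exact structMul_smul_single_eq_sum cA hw i j
  · have hcont : Continuous fun t : ℂ =>
        cB i j m + (if i = 3 ∧ j = 3 ∧ m = 2 then 1 else 0) * t ^ 2 := by fun_prop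
    simpa using (hcont.tendsto 0).mono_left nhdsWithin_le_nhds
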